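/- arXiv:2109.13803 — 2 statements merged into one kernel-verified Lean document; each statement's English description precedes it below -/
import Mathlib

section
/- Let q be an odd prime power, m ≥ 1, and n = q^m + 1. An integer a with 0 ≤ a ≤ q^m is the smallest element of its q-cyclotomic coset modulo n if and only if a ≤ n/2 and a cannot be written as l·q^{m−i} + h for any integers i, l, h with 1 ≤ i < m, 1 ≤ l ≤ (q^i − 1)/2, and −l(q^{m−i} − 1)/(q^i + 1) < h < l(q^{m−i} + 1)/(q^i − 1). -/
/-!
Since `q ^ m ≡ -1 [ZMOD n]`, the coset of `a` is `{±a q^i mod n : 0 ≤ i < m}`, so `a` is its leader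
iff no `a q^i` with `0 ≤ i < m` is congruent modulo `n` to an integer `t` with `|t| < a`. For
`i = 0` such a `t` exists exactly when `n < 2a`. For `1 ≤ i < m`, write `a q^i = n l + t`; with
`h := a - l q^(m-i)` one gets `t = h q^i - l`, so `-a < t < a` are precisely the two inequalities
on `h`, while `1 ≤ l ≤ (q^i - 1)/2` comes from `2a ≤ n` and the parity of `q^i`.
-/

def IsNearMultiple (n a : ℕ) (x : ℤ) : Prop :=
  ∃ t : ℤ, x ≡ t [ZMOD n] ∧ |t| < a

namespace IsNearMultiple

variable {n a : ℕ} {x y : ℤ}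

theorem congr (h : x ≡ y [ZMOD n]) : IsNearMultiple n a x ↔ IsNearMultiple n a y :=
  ⟨fun ⟨t, ht, hta⟩ => ⟨t, h.symm.trans ht, hta⟩, fun ⟨t, ht, hta⟩ => ⟨t, h.trans ht, hta⟩⟩

theorem neg_iff : IsNearMultiple n a (-x) ↔ IsNearMultiple n a x :=
  ⟨fun ⟨t, ht, hta⟩ => ⟨-t, by simpa using ht.neg, by rwa [abs_neg]⟩,
    fun ⟨t, ht, hta⟩ => ⟨-t, ht.neg, by rwa [abs_neg]⟩⟩

end IsNearMultiple

theorem isNearMultiple_self_iff {n a : ℕ} (ha : a ≤ n) : IsNearMultiple n a a ↔ n < 2 * a := by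
  constructor
  · rintro ⟨t, ht, hta⟩
    obtain ⟨k, hk⟩ := ht.dvd
    obtain ⟨hta, hta'⟩ := abs_lt.1 hta
    have : k < 0 := by nlinarith
    nlinarith
  · intro h
    exact ⟨a - n, Int.modEq_iff_dvd.2 ⟨-1, by ring⟩, abs_lt.2 ⟨by omega, by omega⟩⟩

theorem natCast_mod_eq_of_modEq {x n : ℕ} {s : ℤ} (h : (x : ℤ) ≡ s [ZMOD n]) (h0 : 0 ≤ s)
    (h1 : s < n) : ((x % n : ℕ) : ℤ) = s := by
  push_cast
  rw [h]
  exact Int.emod_eq_of_lt h0 h1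

theorem pow_add_modEq_neg (q m j : ℕ) :
    (q : ℤ) ^ (j + m) ≡ -(q : ℤ) ^ j [ZMOD (q ^ m + 1 : ℕ)] :=
  Int.modEq_iff_dvd.2 ⟨-(q : ℤ) ^ j, by push_cast; ring⟩

theorem pos_and_two_mul_le_of_mul_eq {n a Q : ℕ} {L t : ℤ} (hQ : Odd Q) (h2a : 2 * a ≤ n)
    (hEq : (a : ℤ) * Q = n * L + t) (ht : |t| < a) : 0 < L ∧ 2 * L ≤ Q - 1 := by
  obtain ⟨c, rfl⟩ := hQ
  obtain ⟨hta, hta'⟩ := abs_lt.1 ht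
  have h2a' : 2 * (a : ℤ) ≤ n := by exact_mod_cast h2a
  push_cast at hEq ⊢
  have hpos : 0 < (n : ℤ) * L := by nlinarith
  have hlt : (n : ℤ) * (2 * L) < n * (2 * c + 2) := by nlinarith
  have hn : (0 : ℤ) < n := by omega
  constructor
  · exact pos_of_mul_pos_right hpos hn.le
  · have := lt_of_mul_lt_mul_left hlt hn.le
    omega

theorem mul_pow_eq_of_le (q : ℕ) {m i : ℕ} (him : i ≤ m) (l h : ℤ) :
    (l * (q : ℤ) ^ (m - i) + h) * (q : ℤ) ^ i = (q ^ m + 1 : ℕ) * l + (h * (q : ℤ) ^ i - l) := by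
  have hpow : (q : ℤ) ^ (m - i) * (q : ℤ) ^ i = (q : ℤ) ^ m := by
    rw [← pow_add, Nat.sub_add_cancel him]
  push_cast
  linear_combination l * hpow

section Coset

variable {q m n a : ℕ}

theorem isNearMultiple_mul_pow_add_iff (hn : n = q ^ m + 1) (j : ℕ) :
    IsNearMultiple n a (a * (q : ℤ) ^ (j + m)) ↔ IsNearMultiple n a (a * (q : ℤ) ^ j) := by
  subst hn
  rw [IsNearMultiple.congr ((pow_add_modEq_neg q m j).mul_left a), mul_neg,
    IsNearMultiple.neg_iff]

theorem isNearMultiple_mul_pow_mod_iff (hn : n = q ^ m + 1) (j : ℕ) :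
    IsNearMultiple n a (a * (q : ℤ) ^ j) ↔ IsNearMultiple n a (a * (q : ℤ) ^ (j % m)) := by
  have hperiod (i k : ℕ) :
      IsNearMultiple n a (a * (q : ℤ) ^ (i + m * k)) ↔ IsNearMultiple n a (a * (q : ℤ) ^ i) := by
    induction k with
    | zero => simp
    | succ k ih => rw [mul_add_one, ← add_assoc, isNearMultiple_mul_pow_add_iff hn, ih]
  rw [← hperiod (j % m) (j / m), Nat.mod_add_div]

theorem forall_le_mul_pow_mod_iff (hn : n = q ^ m + 1) (ha : a ≤ n) :
    (∀ j, a ≤ a * q ^ j % n) ↔ ∀ j, ¬IsNearMultiple n a (a * (q : ℤ) ^ j) := by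
  constructor
  · rintro hle j ⟨t, ht, hta⟩
    obtain ⟨k, s, hk, hs0, hsa⟩ : ∃ k s, ((a * q ^ k : ℕ) : ℤ) ≡ s [ZMOD n] ∧ 0 ≤ s ∧ s < a := by
      rcases le_or_gt 0 t with ht0 | ht0
      · exact ⟨j, t, by push_cast; exact ht, ht0, lt_of_abs_lt hta⟩
      · refine ⟨j + m, -t, ?_, by omega, neg_lt.1 (abs_lt.1 hta).1⟩
        subst hn
        have h := (pow_add_modEq_neg q m j).mul_left (a : ℤ)
        rw [mul_neg] at h
        exact_mod_cast h.trans ht.neg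
    have := natCast_mod_eq_of_modEq hk hs0 (by omega)
    have := hle k
    omega
  · intro hnear j
    by_contra! hlt
    refine hnear j ⟨(a * q ^ j % n : ℕ), ?_, ?_⟩
    · exact_mod_cast (Nat.mod_modEq _ n).symm
    · rw [abs_of_nonneg (by positivity)]
      exact_mod_cast hlt

theorem forall_le_mul_pow_mod_iff_forall_lt (hn : n = q ^ m + 1) (ha : a ≤ n) (hm : 0 < m) :
    (∀ j, a ≤ a * q ^ j % n) ↔ ∀ i < m, ¬IsNearMultiple n a (a * (q : ℤ) ^ i) := by
  rw [forall_le_mul_pow_mod_iff hn ha]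
  refine ⟨fun h i _ => h i, fun h j => ?_⟩
  rw [isNearMultiple_mul_pow_mod_iff hn]
  exact h _ (Nat.mod_lt j hm)

theorem isNearMultiple_mul_pow_iff {i : ℕ} (hq : Odd q) (hn : n = q ^ m + 1)
    (him : i ≤ m) (h2a : 2 * a ≤ n) :
    IsNearMultiple n a (a * (q : ℤ) ^ i) ↔
      ∃ (l : ℕ) (h : ℤ), 1 ≤ l ∧ l ≤ (q ^ i - 1) / 2 ∧
        (-(l : ℤ) * ((q : ℤ) ^ (m - i) - 1) < h * ((q : ℤ) ^ i + 1)) ∧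
        (h * ((q : ℤ) ^ i - 1) < (l : ℤ) * ((q : ℤ) ^ (m - i) + 1)) ∧
        (a : ℤ) = (l : ℤ) * (q : ℤ) ^ (m - i) + h := by
  subst hn
  constructor
  · rintro ⟨t, ht, hta⟩
    obtain ⟨L, hL⟩ := ht.symm.dvd
    obtain ⟨hL0, hL2⟩ := pos_and_two_mul_le_of_mul_eq (n := q ^ m + 1) (Q := q ^ i) (L := L)
      hq.pow h2a (by push_cast at hL ⊢; linarith) hta
    lift L to ℕ using hL0.le
    set h : ℤ := a - L * (q : ℤ) ^ (m - i)
    have hat : (a : ℤ) = L * (q : ℤ) ^ (m - i) + h := by ring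
    have ht : t = h * (q : ℤ) ^ i - L := by
      have := mul_pow_eq_of_le q him L h
      rw [← hat] at this
      linarith
    obtain ⟨hta, hta'⟩ := abs_lt.1 hta
    refine ⟨L, h, by omega, ?_, by linarith, by linarith, hat⟩
    omega
  · rintro ⟨l, h, -, -, hlow, hup, hal⟩
    refine ⟨h * (q : ℤ) ^ i - l, Int.modEq_iff_dvd.2 ⟨-l, ?_⟩, abs_lt.2 ⟨by linarith, by linarith⟩⟩
    rw [hal, mul_pow_eq_of_le q him]
    ring

end Coset

theorem cosetLeader_iff_odd_q_general (p e m : ℕ) (hpodd : Odd p)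
    (hm : 1 ≤ m) (q : ℕ) (hq : q = p ^ e)
    (n : ℕ) (hn : n = q ^ m + 1) (a : ℕ) (ha : a ≤ q ^ m) :
    (∀ j : ℕ, a ≤ (a * q ^ j) % n) ↔
      (a ≤ n / 2 ∧
        ¬ ∃ (i l : ℕ) (h : ℤ), 1 ≤ i ∧ i < m ∧ 1 ≤ l ∧
          l ≤ (q ^ i - 1) / 2 ∧
          (-(l : ℤ) * ((q : ℤ) ^ (m - i) - 1) < h * ((q : ℤ) ^ i + 1)) ∧
          (h * ((q : ℤ) ^ i - 1) < (l : ℤ) * ((q : ℤ) ^ (m - i) + 1)) ∧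
          (a : ℤ) = (l : ℤ) * (q : ℤ) ^ (m - i) + h) := by
  have hqodd : Odd q := hq ▸ hpodd.pow
  have han : a ≤ n := by omega
  rw [forall_le_mul_pow_mod_iff_forall_lt hn han hm]
  constructor
  · intro hfar
    have h2a : ¬n < 2 * a := fun h => hfar 0 hm (by simpa using (isNearMultiple_self_iff han).2 h)
    refine ⟨by omega, ?_⟩
    rintro ⟨i, l, h, -, him, hrepr⟩
    exact hfar i him ((isNearMultiple_mul_pow_iff hqodd hn him.le (by omega)).2 ⟨l, h, hrepr⟩)
  · rintro ⟨hhalf, hnone⟩ i him hnear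
    rcases Nat.eq_zero_or_pos i with rfl | hi
    · have := (isNearMultiple_self_iff han).1 (by simpa using hnear)
      omega
    · obtain ⟨l, h, hrepr⟩ := (isNearMultiple_mul_pow_iff hqodd hn him.le (by omega)).1 hnear
      exact hnone ⟨i, l, h, hi, him, hrepr⟩

/-- A necessary and sufficient condition for `0 ≤ a ≤ q^m` to be the coset
leader of its `q`-cyclotomic coset modulo `n = q^m + 1`, when `q` is an odd
prime power. -/
theorem cosetLeader_iff_odd_q (p e m : ℕ) (hp : p.Prime) (hpodd : Odd p)
    (he : 1 ≤ e) (hm : 1 ≤ m) (q : ℕ) (hq : q = p ^ e)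
    (n : ℕ) (hn : n = q ^ m + 1) (a : ℕ) (ha : a ≤ q ^ m) :
    (∀ j : ℕ, a ≤ (a * q ^ j) % n) ↔
      (a ≤ n / 2 ∧
        ¬ ∃ (i l : ℕ) (h : ℤ), 1 ≤ i ∧ i < m ∧ 1 ≤ l ∧
          l ≤ (q ^ i - 1) / 2 ∧
          (-(l : ℤ) * ((q : ℤ) ^ (m - i) - 1) < h * ((q : ℤ) ^ i + 1)) ∧
          (h * ((q : ℤ) ^ i - 1) < (l : ℤ) * ((q : ℤ) ^ (m - i) + 1)) ∧
          (a : ℤ) = (l : ℤ) * (q : ℤ) ^ (m - i) + h) :=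
  cosetLeader_iff_odd_q_general p e m hpodd hm q hq n hn a ha
end

section
/- Let q be a power of 2, let l_0 and t be positive integers, m = l_0(2t+1), and δ = q^{l_0} + 1. Then there exist 2δ pairwise distinct elements u_1, …, u_{2δ} of U_{q^m+1} such that Σ_j u_j^i = 0 for all i = 0, 1, …, q^{l_0}. Concretely, if ξ ∈ U_{q^m+1} has order q^{l_0}+1 and α ∈ U_{q^m+1} is outside the subgroup generated by ξ, then the elements ξ^i and ξ^i·α for i = 1, …, q^{l_0}+1 satisfy these power-sum equations. -/
/-! The roots of unity of order `δ` form a subgroup `⟨ξ⟩ ⊆ U_{q^m+1}` since `q^{l₀} + 1` divides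
`(q^{l₀})^{2t+1} + 1`, and any `α ∈ U_{q^m+1}` of order `q^m + 1 > δ` lies outside it. For
`0 < i < δ` the `i`-th power sum over `⟨ξ⟩ ∪ α⟨ξ⟩` is `(1 + α^i) · ∑_j (ξ^i)^j`, a vanishing
geometric sum; for `i = 0` it is `2δ = 0` in characteristic two. -/

open Finset

theorem FiniteField.exists_isPrimitiveRoot_of_dvd {K : Type*} [Field K] [Fintype K] {n : ℕ}
    (hn : n ∣ Fintype.card K - 1) : ∃ ζ : K, IsPrimitiveRoot ζ n := by
  classical
  obtain ⟨g, hg⟩ := IsCyclic.exists_ofOrder_eq_natCard (α := Kˣ)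
  have hgen : IsPrimitiveRoot (g : K) (Fintype.card K - 1) := by
    rw [IsPrimitiveRoot.coe_units_iff, ← Fintype.card_units, ← Nat.card_eq_fintype_card, ← hg]
    exact IsPrimitiveRoot.orderOf g
  obtain ⟨c, hc⟩ := hn
  exact ⟨_, hgen.pow (by have := Fintype.one_lt_card (α := K); omega) (hc.trans (mul_comm n c))⟩

namespace IsPrimitiveRoot

variable {R : Type*} [CommRing R] [IsDomain R] {ξ : R} {d : ℕ}

theorem sum_pow_pow_eq_zero (hξ : IsPrimitiveRoot ξ d) {i : ℕ} (hi : ¬ d ∣ i) :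
    ∑ j : Fin d, (ξ ^ (j : ℕ)) ^ i = 0 := by
  have hne : ξ ^ i - 1 ≠ 0 := sub_ne_zero.2 (mt (hξ.pow_eq_one_iff_dvd i).1 hi)
  have hgeom : (∑ j ∈ range d, (ξ ^ i) ^ j) * (ξ ^ i - 1) = 0 := by
    rw [geom_sum_mul, pow_right_comm, hξ.pow_eq_one, one_pow, sub_self]
  simp_rw [pow_right_comm ξ _ i]
  rw [Fin.sum_univ_eq_sum_range (fun j => (ξ ^ i) ^ j)]
  exact (mul_eq_zero.1 hgeom).resolve_right hne

end IsPrimitiveRoot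

section TwoCosets

variable {R : Type*} [CommRing R]

def twoCosets (α ξ : R) (d : ℕ) (p : Fin 2 × Fin d) : R :=
  α ^ (p.1 : ℕ) * ξ ^ (p.2 : ℕ)

variable {α ξ : R} {d : ℕ}

theorem twoCosets_pow_eq_one {n : ℕ} (hα : α ^ n = 1) (hξ : ξ ^ n = 1)
    (p : Fin 2 × Fin d) : twoCosets α ξ d p ^ n = 1 := by
  rw [twoCosets, mul_pow, pow_right_comm, hα, one_pow, pow_right_comm, hξ, one_pow, one_mul]

theorem sum_twoCosets_pow (i : ℕ) :
    ∑ p, twoCosets α ξ d p ^ i = (1 + α ^ i) * ∑ j : Fin d, (ξ ^ (j : ℕ)) ^ i := by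
  simp only [twoCosets, Fintype.sum_prod_type, Fin.sum_univ_two, mul_pow, ← mul_sum]
  simp only [Fin.val_zero, Fin.val_one, pow_zero, one_pow, pow_one]
  ring

theorem twoCosets_pow_self (hξ : IsPrimitiveRoot ξ d) (p : Fin 2 × Fin d) :
    twoCosets α ξ d p ^ d = (α ^ d) ^ (p.1 : ℕ) := by
  rw [twoCosets, mul_pow, pow_right_comm ξ, hξ.pow_eq_one, one_pow, mul_one, pow_right_comm]

variable [IsDomain R]

theorem twoCosets_injective (hξ : IsPrimitiveRoot ξ d) (hα₀ : α ≠ 0) (hα : α ^ d ≠ 1) :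
    Function.Injective (twoCosets α ξ d) := by
  rintro ⟨a, j⟩ ⟨b, k⟩ h
  -- the two cosets are told apart by their `d`-th powers
  have hab : a = b := by
    have hpow := congrArg (· ^ d) h
    simp only [twoCosets_pow_self hξ] at hpow
    fin_cases a <;> fin_cases b <;> simp_all [eq_comm]
  subst hab
  have hjk : ξ ^ (j : ℕ) = ξ ^ (k : ℕ) := mul_left_cancel₀ (pow_ne_zero _ hα₀) h
  exact Prod.ext rfl (Fin.ext (hξ.pow_inj j.isLt k.isLt hjk))

theorem sum_twoCosets_pow_eq_zero [CharP R 2] (hξ : IsPrimitiveRoot ξ d) {i : ℕ} (hi : i < d) :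
    ∑ p, twoCosets α ξ d p ^ i = 0 := by
  rw [sum_twoCosets_pow]
  rcases i.eq_zero_or_pos with rfl | hi₀
  · rw [pow_zero, one_add_one_eq_two, CharTwo.two_eq_zero, zero_mul]
  · rw [hξ.sum_pow_pow_eq_zero (Nat.not_dvd_of_pos_of_lt hi₀ hi), mul_zero]

end TwoCosets

/-- Characteristic 2: for `m = l₀(2t+1)` and `δ = q^{l₀} + 1`, there exist
`2δ` pairwise distinct elements of `U_{q^m+1} ⊆ F_{q^{2m}}^*` all of whose
power sums of orders `0, 1, …, q^{l₀}` vanish. -/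
theorem power_sums_vanish_char_two (s l₀ t : ℕ) (hs : 1 ≤ s) (hl₀ : 1 ≤ l₀)
    (ht : 1 ≤ t) (m : ℕ) (hm : m = l₀ * (2 * t + 1))
    (q : ℕ) (hq : q = 2 ^ s) (δ : ℕ) (hδ : δ = q ^ l₀ + 1)
    {K : Type*} [Field K] [Fintype K] (hcard : Fintype.card K = q ^ (2 * m)) :
    ∃ u : Fin (2 * δ) → K, Function.Injective u ∧
      (∀ j, (u j) ^ (q ^ m + 1) = 1) ∧
      (∀ i : ℕ, i ≤ q ^ l₀ → (∑ j, (u j) ^ i) = 0) := by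
  have hm₀ : m ≠ 0 := by rw [hm]; positivity
  have hcard_even : Even (Fintype.card K) := by
    rw [hcard, hq, ← pow_mul]
    exact Nat.even_pow.2 ⟨even_two, by positivity⟩
  have : CharP K 2 :=
    ringChar.of_eq (FiniteField.even_card_iff_char_two.2 (Nat.even_iff.1 hcard_even))
  have hδ_lt : δ < q ^ m + 1 := by
    have : q ^ l₀ < q ^ m :=
      Nat.pow_lt_pow_right (hq ▸ Nat.one_lt_two_pow (by omega)) (by rw [hm]; nlinarith)
    omega
  obtain ⟨c, hc⟩ : δ ∣ q ^ m + 1 := by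
    simpa [hδ, hm, pow_mul] using Odd.nat_add_dvd_pow_add_pow (q ^ l₀) 1 (odd_two_mul_add_one t)
  obtain ⟨α, hα⟩ : ∃ α : K, IsPrimitiveRoot α (q ^ m + 1) := by
    refine FiniteField.exists_isPrimitiveRoot_of_dvd (Dvd.intro (q ^ m - 1) ?_)
    rw [hcard, two_mul, pow_add, mul_self_tsub_one]
  have hξ : IsPrimitiveRoot (α ^ c) δ := hα.pow (by omega) (hc.trans (mul_comm δ c))
  have hinj := twoCosets_injective hξ (hα.ne_zero (by omega))
    (hα.pow_ne_one_of_pos_of_lt (by omega) hδ_lt)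
  have hξU : (α ^ c) ^ (q ^ m + 1) = 1 := (hξ.pow_eq_one_iff_dvd _).2 ⟨c, hc⟩
  refine ⟨twoCosets α (α ^ c) δ ∘ finProdFinEquiv.symm,
    hinj.comp finProdFinEquiv.symm.injective,
    fun j => twoCosets_pow_eq_one hα.pow_eq_one hξU _, fun i hi => ?_⟩
  rw [Function.comp_def, Equiv.sum_comp finProdFinEquiv.symm (twoCosets α (α ^ c) δ · ^ i)]
  exact sum_twoCosets_pow_eq_zero hξ (by omega)
end
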